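/- arXiv:1212.2544 — 2 statements merged into one kernel-verified Lean document; each statement's English description precedes it below -/
import Mathlib

section
/- Let H be a standard Hanner polytope in ℝⁿ with associated affine subspaces A_F, and for j = 1,…,n let E_j = H ∩ (e_j + e_j^⊥), which is a face of H with centroid e_j. Then aff(E_j) = e_j + span{e_i : i ≠ j, e_i + e_j ∈ H} and A_{E_j} = e_j + span{e_i : i ≠ j, e_i + e_j ∉ H}. -/
open MeasureTheory Set Submodule
open scoped RealInnerProductSpace Pointwise Classical

noncomputable section

abbrev Euc (n : ℕ) := EuclideanSpace ℝ (Fin n)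

variable {n : ℕ}

/-- A convex body: a compact convex set with nonempty interior. -/
def IsConvexBody (K : Set (Euc n)) : Prop :=
  Convex ℝ K ∧ IsCompact K ∧ (interior K).Nonempty

/-- The polar of a set. -/
def polarSet (K : Set (Euc n)) : Set (Euc n) := {y | ∀ x ∈ K, ⟪x, y⟫ ≤ 1}

/-- Volume (as a real number). -/
def vol (A : Set (Euc n)) : ℝ := (volume A).toReal

/-- The volume product of a symmetric convex body. -/
def volProd (K : Set (Euc n)) : ℝ := vol K * vol (polarSet K)

/-- Banach–Mazur distance between symmetric convex bodies. -/
def bmDist (K L : Set (Euc n)) : ℝ :=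
  sInf {c : ℝ | 1 ≤ c ∧ ∃ T : (Euc n) ≃ₗ[ℝ] (Euc n), L ⊆ T '' K ∧ T '' K ⊆ c • L}

/-- The dimension of a set: dimension of the linear span of `A - A`. -/
def setDim (A : Set (Euc n)) : ℕ :=
  Module.finrank ℝ (Submodule.span ℝ (A - A) : Submodule ℝ (Euc n))

/-- Dimension with the convention `dim ∅ = -1`. -/
def edim (A : Set (Euc n)) : ℤ := if A = ∅ then -1 else (setDim A : ℤ)

/-- ℓ1-sum, with the convention `A ⊕₁ ∅ = A`, `∅ ⊕₁ B = B`. -/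
def l1Sum (A B : Set (Euc n)) : Set (Euc n) :=
  if A = ∅ then B else if B = ∅ then A else convexHull ℝ (A ∪ B)

/-- The centroid of a set, computed with respect to the Hausdorff measure of dimension
`setDim A` (this is the Lebesgue measure on the affine hull for convex sets). -/
def centroid (A : Set (Euc n)) : Euc n :=
  ((μH[(setDim A : ℝ)] A).toReal)⁻¹ • ∫ x in A, x ∂(μH[(setDim A : ℝ)])

/-- `F` is a (proper, nonempty) face of `P` cut out by a supporting hyperplane whose normal
vector lies in `V`. -/
def IsFaceIn (V : Submodule ℝ (Euc n)) (P F : Set (Euc n)) : Prop :=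
  ∃ (u : Euc n) (b : ℝ), u ∈ V ∧ u ≠ 0 ∧ (∀ x ∈ P, ⟪x, u⟫ ≤ b) ∧
    (∃ x ∈ P, ⟪x, u⟫ = b) ∧ F = {x ∈ P | ⟪x, u⟫ = b} ∧ F ≠ P

/-- `F` is a face of `P` (cut out by a supporting hyperplane). -/
def IsFaceOf (P F : Set (Euc n)) : Prop := IsFaceIn ⊤ P F

/-- The polar of `K` computed inside the subspace `V`. -/
def polarIn (V : Submodule ℝ (Euc n)) (K : Set (Euc n)) : Set (Euc n) :=
  {y | y ∈ V ∧ ∀ x ∈ K, ⟪x, y⟫ ≤ 1}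

/-- The dual face of a face `F` of `P`, computed inside the subspace `V`. -/
def dualFaceIn (V : Submodule ℝ (Euc n)) (P F : Set (Euc n)) : Set (Euc n) :=
  {y ∈ polarIn V P | ∀ x ∈ F, ⟪x, y⟫ = 1}

/-- The dual face `F* = {y ∈ P° : ⟨x,y⟩ = 1 ∀ x ∈ F}`. -/
def dualFace (P F : Set (Euc n)) : Set (Euc n) := dualFaceIn ⊤ P F

/-- A convex polytope: convex hull of finitely many points. -/
def IsPolytope (P : Set (Euc n)) : Prop := ∃ S : Finset (Euc n), P = convexHull ℝ (S : Set (Euc n))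

/-- A flag over `P`: an increasing chain of faces `F⁰ ⊂ F¹ ⊂ ⋯ ⊂ F^{n-1}` with `dim F^k = k`. -/
def IsFlagOf (P : Set (Euc n)) (𝔽 : Fin n → Set (Euc n)) : Prop :=
  (∀ k, IsFaceOf P (𝔽 k)) ∧ (∀ k : Fin n, setDim (𝔽 k) = (k : ℕ)) ∧
  (∀ k l : Fin n, k ≤ l → 𝔽 k ⊆ 𝔽 l)

/-- The volume of the simplex `Z_𝔽 = conv{0, z_{F⁰}, …, z_{F^{n-1}}}`. -/
def flagVol (Z : Set (Euc n) → Euc n) (𝔽 : Fin n → Set (Euc n)) : ℝ :=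
  vol (convexHull ℝ (insert (0 : Euc n) (Set.range fun k => Z (𝔽 k))))

/-- The volume function `V(Z) = Σ_𝔽 |Z_𝔽|`, sum over all flags of `P`. -/
def Vfun (P : Set (Euc n)) (Z : Set (Euc n) → Euc n) : ℝ :=
  ∑ᶠ (𝔽 : Fin n → Set (Euc n)) (_ : IsFlagOf P 𝔽), flagVol Z 𝔽

/-- The partial volume function: sum over all flags of `P` containing the face `G`. -/
def VfunG (P G : Set (Euc n)) (Z : Set (Euc n) → Euc n) : ℝ :=
  ∑ᶠ (𝔽 : Fin n → Set (Euc n)) (_ : IsFlagOf P 𝔽 ∧ G ∈ Set.range 𝔽), flagVol Z 𝔽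

/-- `x_F` is the point of `(t_F • A_F) ∩ ∂K` nearest to `c_F`, where `t_F • A_F` is
tangent to `K`. -/
def TangentXPoint (K AF : Set (Euc n)) (cF : Euc n) (tF : ℝ) (xF : Euc n) : Prop :=
  0 < tF ∧ (tF • AF) ∩ interior K = ∅ ∧ xF ∈ (tF • AF) ∩ frontier K ∧
  ∀ z ∈ (tF • AF) ∩ frontier K, dist cF xF ≤ dist cF z

/-- The pair of points `x_F, y_F` constructed from `K`, `A_F`, `c_F`. -/
def TangentPointAt (K AF : Set (Euc n)) (cF : Euc n) (tF : ℝ) (xF yF : Euc n) : Prop :=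
  TangentXPoint K AF cF tF xF ∧ yF = tF • cF

/-- Conditions (a) and (b) for the affine subspace `A F` at a face `F` of `body`. -/
def GoodAt (body : Set (Euc n)) (A : Set (Euc n) → Set (Euc n)) (c : Set (Euc n) → Euc n)
    (F : Set (Euc n)) : Prop :=
  (∃ S : AffineSubspace ℝ (Euc n), A F = (S : Set (Euc n))) ∧
  A F ∩ body = {c F} ∧ c F ∈ intrinsicInterior ℝ F ∧
  setDim (A F) + setDim F + 1 = n

/-- Conditions (a), (b), (c) for the family of affine subspaces `A_F` attached to the faces
of `P` and of `P°`. -/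
def GoodFamily (P : Set (Euc n)) (A : Set (Euc n) → Set (Euc n)) (c : Set (Euc n) → Euc n) : Prop :=
  (∀ F, IsFaceOf P F → GoodAt P A c F ∧
      ∀ x ∈ A F, ∀ y ∈ A (dualFace P F), ⟪x, y⟫ = 1) ∧
  (∀ G, IsFaceOf (polarSet P) G → GoodAt (polarSet P) A c G)

/-- Hanner polytopes: symmetric segments, closed under ℓ1 and ℓ∞ sums of
linearly independent summands. -/
inductive IsHanner : Set (Euc n) → Prop
  | seg (x : Euc n) (hx : x ≠ 0) : IsHanner (segment ℝ (-x) x)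
  | l1 {A B : Set (Euc n)} (hA : IsHanner A) (hB : IsHanner B)
      (hspan : Submodule.span ℝ A ⊓ Submodule.span ℝ B = ⊥) :
      IsHanner (convexHull ℝ (A ∪ B))
  | linf {A B : Set (Euc n)} (hA : IsHanner A) (hB : IsHanner B)
      (hspan : Submodule.span ℝ A ⊓ Submodule.span ℝ B = ⊥) :
      IsHanner (A + B)

/-- The rules of Definition 4.1 defining `A` on the faces of the ℓ1-sum `H₁ ⊕₁ H₂` from the
families `A₁, A₂` for `H₁, H₂`. -/
def L1Rules (H₁ H₂ : Set (Euc n)) (A₁ A₂ A : Set (Euc n) → Set (Euc n)) : Prop :=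
  (∀ F₁, IsFaceIn (Submodule.span ℝ H₁) H₁ F₁ →
      A F₁ = A₁ F₁ + (Submodule.span ℝ H₂ : Set (Euc n))) ∧
  (∀ F₂, IsFaceIn (Submodule.span ℝ H₂) H₂ F₂ →
      A F₂ = (Submodule.span ℝ H₁ : Set (Euc n)) + A₂ F₂) ∧
  (∀ F₁ F₂, IsFaceIn (Submodule.span ℝ H₁) H₁ F₁ → IsFaceIn (Submodule.span ℝ H₂) H₂ F₂ →
      A (convexHull ℝ (F₁ ∪ F₂)) =
        ((setDim F₁ + 1 : ℝ) / (setDim F₁ + setDim F₂ + 2)) • A₁ F₁ +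
        ((setDim F₂ + 1 : ℝ) / (setDim F₁ + setDim F₂ + 2)) • A₂ F₂)

/-- The rules of Definition 4.1 defining `A` on the faces of the ℓ∞-sum `H₁ ⊕∞ H₂` from the
families `A₁, A₂` for `H₁, H₂`. -/
def LInfRules (H₁ H₂ : Set (Euc n)) (A₁ A₂ A : Set (Euc n) → Set (Euc n)) : Prop :=
  (∀ F₁, IsFaceIn (Submodule.span ℝ H₁) H₁ F₁ → A (F₁ + H₂) = A₁ F₁) ∧
  (∀ F₂, IsFaceIn (Submodule.span ℝ H₂) H₂ F₂ → A (H₁ + F₂) = A₂ F₂) ∧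
  (∀ F₁ F₂, IsFaceIn (Submodule.span ℝ H₁) H₁ F₁ → IsFaceIn (Submodule.span ℝ H₂) H₂ F₂ →
      A (F₁ + F₂) = A₁ F₁ + A₂ F₂ +
        (Submodule.span ℝ
          {(((setDim H₁ : ℝ) - setDim F₁)⁻¹ • centroid F₁ -
            ((setDim H₂ : ℝ) - setDim F₂)⁻¹ • centroid F₂)} : Set (Euc n)))

/-- A Hanner polytope `H` together with its recursively defined family `A` of affine
subspaces, paired with the (relative) polar Hanner polytope `H'` and its family `A'`. -/
inductive HannerRep :
    Set (Euc n) → (Set (Euc n) → Set (Euc n)) → Set (Euc n) → (Set (Euc n) → Set (Euc n)) → Prop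
  | seg (x : Euc n) (hx : x ≠ 0) (A A' : Set (Euc n) → Set (Euc n))
      (hA1 : A {x} = {x}) (hA2 : A {-x} = {-x})
      (hA'1 : A' {(‖x‖ ^ 2)⁻¹ • x} = {(‖x‖ ^ 2)⁻¹ • x})
      (hA'2 : A' {-((‖x‖ ^ 2)⁻¹ • x)} = {-((‖x‖ ^ 2)⁻¹ • x)}) :
      HannerRep (segment ℝ (-x) x) A
        (segment ℝ (-((‖x‖ ^ 2)⁻¹ • x)) ((‖x‖ ^ 2)⁻¹ • x)) A'
  | l1 {H₁ H₂ H₁' H₂' : Set (Euc n)} {A₁ A₂ A₁' A₂' A A' : Set (Euc n) → Set (Euc n)}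
      (h₁ : HannerRep H₁ A₁ H₁' A₁') (h₂ : HannerRep H₂ A₂ H₂' A₂')
      (horth : Submodule.span ℝ (H₂ ∪ H₂') ≤ (Submodule.span ℝ (H₁ ∪ H₁'))ᗮ)
      (hA : L1Rules H₁ H₂ A₁ A₂ A) (hA' : LInfRules H₁' H₂' A₁' A₂' A') :
      HannerRep (convexHull ℝ (H₁ ∪ H₂)) A (H₁' + H₂') A'
  | linf {H₁ H₂ H₁' H₂' : Set (Euc n)} {A₁ A₂ A₁' A₂' A A' : Set (Euc n) → Set (Euc n)}
      (h₁ : HannerRep H₁ A₁ H₁' A₁') (h₂ : HannerRep H₂ A₂ H₂' A₂')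
      (horth : Submodule.span ℝ (H₂ ∪ H₂') ≤ (Submodule.span ℝ (H₁ ∪ H₁'))ᗮ)
      (hA : LInfRules H₁ H₂ A₁ A₂ A) (hA' : L1Rules H₁' H₂' A₁' A₂' A') :
      HannerRep (H₁ + H₂) A (convexHull ℝ (H₁' ∪ H₂')) A'

/-- The standard symmetric segment `[-e_j, e_j]`. -/
def stdSeg (j : Fin n) : Set (Euc n) :=
  segment ℝ (-(EuclideanSpace.single j (1 : ℝ))) (EuclideanSpace.single j (1 : ℝ))

/-- A standard Hanner polytope `H` (built from the segments `[-e_j, e_j]`) together with its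
recursively defined family `A` of affine subspaces, paired with the polar standard Hanner
polytope `H'` and its family `A'`. -/
inductive StdHannerRep :
    Set (Euc n) → (Set (Euc n) → Set (Euc n)) → Set (Euc n) → (Set (Euc n) → Set (Euc n)) → Prop
  | seg (j : Fin n) (A A' : Set (Euc n) → Set (Euc n))
      (hA1 : A {EuclideanSpace.single j (1 : ℝ)} = {EuclideanSpace.single j (1 : ℝ)})
      (hA2 : A {-EuclideanSpace.single j (1 : ℝ)} = {-EuclideanSpace.single j (1 : ℝ)})
      (hA'1 : A' {EuclideanSpace.single j (1 : ℝ)} = {EuclideanSpace.single j (1 : ℝ)})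
      (hA'2 : A' {-EuclideanSpace.single j (1 : ℝ)} = {-EuclideanSpace.single j (1 : ℝ)}) :
      StdHannerRep (stdSeg j) A (stdSeg j) A'
  | l1 {H₁ H₂ H₁' H₂' : Set (Euc n)} {A₁ A₂ A₁' A₂' A A' : Set (Euc n) → Set (Euc n)}
      (h₁ : StdHannerRep H₁ A₁ H₁' A₁') (h₂ : StdHannerRep H₂ A₂ H₂' A₂')
      (hspan : Submodule.span ℝ (H₁ ∪ H₁') ⊓ Submodule.span ℝ (H₂ ∪ H₂') = ⊥)
      (hA : L1Rules H₁ H₂ A₁ A₂ A) (hA' : LInfRules H₁' H₂' A₁' A₂' A') :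
      StdHannerRep (convexHull ℝ (H₁ ∪ H₂)) A (H₁' + H₂') A'
  | linf {H₁ H₂ H₁' H₂' : Set (Euc n)} {A₁ A₂ A₁' A₂' A A' : Set (Euc n) → Set (Euc n)}
      (h₁ : StdHannerRep H₁ A₁ H₁' A₁') (h₂ : StdHannerRep H₂ A₂ H₂' A₂')
      (hspan : Submodule.span ℝ (H₁ ∪ H₁') ⊓ Submodule.span ℝ (H₂ ∪ H₂') = ⊥)
      (hA : LInfRules H₁ H₂ A₁ A₂ A) (hA' : L1Rules H₁' H₂' A₁' A₂' A') :
      StdHannerRep (H₁ + H₂) A (convexHull ℝ (H₁' ∪ H₂')) A'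

/-- `H` is a standard Hanner polytope. -/
def IsStdHanner (H : Set (Euc n)) : Prop :=
  ∃ (A : Set (Euc n) → Set (Euc n)) (H' : Set (Euc n)) (A' : Set (Euc n) → Set (Euc n)),
    StdHannerRep H A H' A'

/-- The unit cube `B∞ⁿ = [-1,1]ⁿ`. -/
def cube (n : ℕ) : Set (Euc n) := {x | ∀ i, |x i| ≤ 1}

/-- The unit cross-polytope `B₁ⁿ`. -/
def crossPolytope (n : ℕ) : Set (Euc n) := {x | ∑ i, |x i| ≤ 1}

/-- The coordinate subspace `ℝ^(v) = span{e_j : j ∈ supp v}`. -/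
def suppSpan (v : Euc n) : Submodule ℝ (Euc n) :=
  Submodule.span ℝ {x : Euc n | ∃ j, v j ≠ 0 ∧ x = EuclideanSpace.single j (1 : ℝ)}

/-- Orthogonal projection of a set onto a subspace. -/
def projSet (V : Submodule ℝ (Euc n)) (K : Set (Euc n)) : Set (Euc n) :=
  (fun x => (orthogonalProjection V x : Euc n)) '' K

end

/-!
A standard Hanner polytope `H` has a few coordinate properties that are preserved by ℓ1- and
ℓ∞-sums of summands with disjoint coordinate supports. The decisive one: a point of `E_j` has
vanishing `i`-th coordinate whenever `e_i + e_j ∉ H`. So `E_j` lies in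
`e_j + span{e_i : e_i + e_j ∈ H}`, and the points `e_i + e_j ∈ E_j` span that affine subspace.
Negating every coordinate but the `j`-th maps `E_j` onto itself; on `E_j` this is the point
reflection in `e_j`, which preserves Hausdorff measure, so the centroid is `e_j`. The formula for
`A_{E_j}` follows along the recursion: if `e_j ∈ H₁`, then the facet `E_j` of `H₁ ⊕₁ H₂` is that
of `H₁` and `A` adds `span H₂`, while the facet of `H₁ ⊕∞ H₂` is `E_j(H₁) + H₂` and `A` is
unchanged.
-/

local notation "𝐞" i:max => EuclideanSpace.single i (1 : ℝ)

theorem IsCompact.convexJoin {E : Type*} [TopologicalSpace E] [AddCommGroup E] [Module ℝ E]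
    [ContinuousAdd E] [ContinuousSMul ℝ E] {s t : Set E} (hs : IsCompact s) (ht : IsCompact t) :
    IsCompact (_root_.convexJoin ℝ s t) := by
  have : _root_.convexJoin ℝ s t =
      (fun p : E × E × ℝ => (1 - p.2.2) • p.1 + p.2.2 • p.2.1) '' (s ×ˢ t ×ˢ Set.Icc 0 1) := by
    ext x
    simp [mem_convexJoin, segment_eq_image, and_assoc]
  rw [this]
  exact (hs.prod (ht.prod isCompact_Icc)).image (by fun_prop)

theorem Convex.hausdorffMeasure_pos_lt_top {E : Type*} [NormedAddCommGroup E] [NormedSpace ℝ E]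
    [FiniteDimensional ℝ E] [MeasurableSpace E] [BorelSpace E] {S : Set E} (hS : Convex ℝ S)
    (hSc : IsCompact S) {c : E} (hc : c ∈ S) :
    0 < μH[Module.finrank ℝ (span ℝ ((· - c) '' S))] S ∧
      μH[Module.finrank ℝ (span ℝ ((· - c) '' S))] S < ⊤ := by
  set V := span ℝ ((· - c) '' S)
  set ψ : V → E := fun v => c + v
  have hψ : Isometry ψ := (IsometryEquiv.addLeft c).isometry.comp isometry_subtype_coe
  have hψS : ψ '' (ψ ⁻¹' S) = S := image_preimage_eq_of_subset fun x hx =>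
    ⟨⟨x - c, subset_span ⟨x, hx, rfl⟩⟩, add_sub_cancel c x⟩
  have hK : Convex ℝ (ψ ⁻¹' S) := (hS.translate_preimage_right c).linear_preimage V.subtype
  have h0 : (0 : V) ∈ ψ ⁻¹' S := by simpa [ψ] using hc
  -- a convex set spanning `V` has nonempty interior in `V`
  have hint : (interior (ψ ⁻¹' S)).Nonempty := by
    rw [← hK.convexHull_eq, interior_convexHull_nonempty_iff_affineSpan_eq_top,
      AffineSubspace.affineSpan_eq_top_iff_vectorSpan_eq_top_of_nonempty ℝ V V ⟨0, h0⟩,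
      vectorSpan_eq_span_vsub_set_right ℝ h0, eq_top_iff, ← span_span_coe_preimage]
    refine span_mono ?_
    rintro v ⟨x, hx, hv⟩
    exact ⟨v, by simpa [ψ, ← hv] using hx, sub_zero v⟩
  rw [← hψS, hψ.hausdorffMeasure_image (Or.inl (Nat.cast_nonneg _))]
  exact ⟨Measure.measure_pos_of_nonempty_interior _ hint,
    (hψ.isClosedEmbedding.isCompact_preimage hSc).measure_lt_top⟩

theorem setDim_eq_finrank_span_sub {n : ℕ} {S : Set (Euc n)} {c : Euc n} (hc : c ∈ S) :
    setDim S = Module.finrank ℝ (span ℝ ((· - c) '' S)) := by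
  rw [setDim, show S - S = S -ᵥ S from rfl, ← vectorSpan_def,
    vectorSpan_eq_span_vsub_set_right ℝ hc]
  rfl

theorem centroid_eq_of_symmetric {n : ℕ} {S : Set (Euc n)} {c : Euc n} (hS : Convex ℝ S)
    (hSc : IsCompact S) (hc : c ∈ S) (hsymm : ∀ x ∈ S, 2 • c - x ∈ S) : centroid S = c := by
  set μ := (μH[(setDim S : ℝ)] : Measure (Euc n))
  obtain ⟨hpos, hfin⟩ : 0 < μ S ∧ μ S < ⊤ := by
    simpa only [μ, setDim_eq_finrank_span_sub hc] using hS.hausdorffMeasure_pos_lt_top hSc hc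
  obtain ⟨R, hR⟩ := hSc.isBounded.exists_norm_le
  have hint : IntegrableOn (fun x => x) S μ :=
    Measure.integrableOn_of_bounded hfin.ne aestronglyMeasurable_id
      ((ae_restrict_iff' hSc.measurableSet).mpr (ae_of_all _ hR))
  set σ := IsometryEquiv.subLeft (2 • c)
  have hσS : σ ⁻¹' S = S := by
    ext x
    refine ⟨fun hx => ?_, hsymm x⟩
    simpa [σ] using hsymm _ hx
  have hrefl : ∫ x in S, (2 • c - x) ∂μ = ∫ x in S, x ∂μ := by
    conv_lhs => rw [← hσS]
    exact (σ.measurePreserving_hausdorffMeasure _).setIntegral_preimage_emb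
      σ.toHomeomorph.measurableEmbedding (fun x => x) S
  have hconst : IntegrableOn (fun _ => 2 • c) S μ := integrableOn_const hfin.ne
  rw [integral_sub hconst hint, setIntegral_const] at hrefl
  have hmean : ∫ x in S, x ∂μ = μ.real S • c := by
    linear_combination (norm := module) (-2⁻¹ : ℝ) • hrefl
  change (μ.real S)⁻¹ • ∫ x in S, x ∂μ = c
  rw [hmean, smul_smul, inv_mul_cancel₀ (show μ.real S ≠ 0 from
    (ENNReal.toReal_pos hpos.ne' hfin.ne).ne'), one_smul]

theorem AffineSubspace.coe_mk'_eq_singleton_add {k V : Type*} [Ring k] [AddCommGroup V]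
    [Module k V] (p : V) (W : Submodule k V) :
    (AffineSubspace.mk' p W : Set V) = {p} + (W : Set V) := by
  ext x
  rw [SetLike.mem_coe, AffineSubspace.mem_mk', Set.singleton_add]
  exact ⟨fun h => ⟨x - p, h, add_sub_cancel p x⟩, by rintro ⟨w, hw, rfl⟩; simpa using hw⟩

noncomputable section

variable {n : ℕ}

theorem IsFaceIn.mono {V W : Submodule ℝ (Euc n)} {P F : Set (Euc n)} (hVW : V ≤ W)
    (h : IsFaceIn V P F) : IsFaceIn W P F := by
  obtain ⟨u, b, hu, hrest⟩ := h
  exact ⟨u, b, hVW hu, hrest⟩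

theorem inner_single_one_right (x : Euc n) (j : Fin n) : ⟪x, 𝐞 j⟫ = x j := by
  simp [EuclideanSpace.inner_single_right]

def coordSpan (s : Set (Fin n)) : Submodule ℝ (Euc n) := span ℝ ((fun i => 𝐞 i) '' s)

theorem mem_coordSpan {s : Set (Fin n)} {y : Euc n} : y ∈ coordSpan s ↔ ∀ i ∉ s, y i = 0 := by
  have := (EuclideanSpace.basisFun (Fin n) ℝ).toBasis.mem_span_image (m := y) (s := s)
  simp only [OrthonormalBasis.coe_toBasis, EuclideanSpace.basisFun_apply] at this
  rw [coordSpan, this]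
  simp [Set.subset_def, not_imp_comm]

theorem coordSpan_sup (s t : Set (Fin n)) : coordSpan s ⊔ coordSpan t = coordSpan (s ∪ t) := by
  rw [coordSpan, coordSpan, coordSpan, Set.image_union, span_union]

theorem span_setOf_single (p : Fin n → Prop) :
    span ℝ {x : Euc n | ∃ i, p i ∧ x = 𝐞 i} = coordSpan {i | p i} := by
  simp only [coordSpan, Set.image, Set.mem_ofPred_eq, eq_comm]

def signFlip (s : Set (Fin n)) : Euc n →ₗ[ℝ] Euc n where
  toFun x := WithLp.toLp 2 fun i => if i ∈ s then -x i else x i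
  map_add' x y := by ext i; by_cases h : i ∈ s <;> simp [h, add_comm]
  map_smul' c x := by ext i; by_cases h : i ∈ s <;> simp [h]

@[simp] theorem signFlip_apply (s : Set (Fin n)) (x : Euc n) (i : Fin n) :
    signFlip s x i = if i ∈ s then -x i else x i := rfl

def facet (H : Set (Euc n)) (j : Fin n) : Set (Euc n) := {x ∈ H | x j = 1}

theorem single_mem_facet {H : Set (Euc n)} {j : Fin n} (hj : 𝐞 j ∈ H) : 𝐞 j ∈ facet H j :=
  ⟨hj, by simp⟩

theorem facet_eq_setOf_inner (H : Set (Euc n)) (j : Fin n) :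
    facet H j = {x ∈ H | ⟪x, 𝐞 j⟫ = 1} := by
  simp only [facet, inner_single_one_right]

structure StdHannerShape (H : Set (Euc n)) : Prop where
  convex : Convex ℝ H
  isCompact : IsCompact H
  zero_mem : (0 : Euc n) ∈ H
  signFlip_mem : ∀ s, ∀ x ∈ H, signFlip s x ∈ H
  apply_le_one : ∀ x ∈ H, ∀ i, x i ≤ 1
  apply_eq_zero : ∀ i, 𝐞 i ∉ H → ∀ x ∈ H, x i = 0
  facet_apply_eq_zero : ∀ j, 𝐞 j ∈ H → ∀ x ∈ facet H j, ∀ i ≠ j, 𝐞 i + 𝐞 j ∉ H → x i = 0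

/-- The indices `i ∼ j` of the paper, restricted to the coordinates `i` used by `H`. -/
def adjacent (H : Set (Euc n)) (j : Fin n) : Set (Fin n) := {i | i ≠ j ∧ 𝐞 i ∈ H ∧ 𝐞 i + 𝐞 j ∉ H}

def FacetFormula (H : Set (Euc n)) (A : Set (Euc n) → Set (Euc n)) : Prop :=
  ∀ j, 𝐞 j ∈ H → A (facet H j) = {𝐞 j} + (coordSpan (adjacent H j) : Set (Euc n))

namespace StdHannerShape

variable {H : Set (Euc n)}

theorem span_eq_coordSpan (h : StdHannerShape H) : span ℝ H = coordSpan {i | 𝐞 i ∈ H} :=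
  le_antisymm (span_le.mpr fun x hx => mem_coordSpan.mpr fun i hi => h.apply_eq_zero i hi x hx)
    (span_mono (by rintro _ ⟨i, hi, rfl⟩; exact hi))

theorem single_mem_of_span_eq_top (h : StdHannerShape H) (hspan : span ℝ H = ⊤) (i : Fin n) :
    𝐞 i ∈ H := by
  by_contra hi
  have hi' : 𝐞 i ∈ coordSpan {i | 𝐞 i ∈ H} := h.span_eq_coordSpan ▸ hspan ▸ mem_top
  simpa using mem_coordSpan.mp hi' i hi

theorem isFaceIn_facet (h : StdHannerShape H) {j : Fin n} (hj : 𝐞 j ∈ H) :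
    IsFaceIn (span ℝ H) H (facet H j) := by
  refine ⟨𝐞 j, 1, subset_span hj, by simp, fun x hx => ?_, ⟨𝐞 j, hj, by simp⟩,
    facet_eq_setOf_inner H j, fun hH => ?_⟩
  · simpa [inner_single_one_right] using h.apply_le_one x hx j
  · have h0 := h.zero_mem
    rw [← hH] at h0
    simp [facet] at h0

theorem vectorSpan_facet (h : StdHannerShape H) {j : Fin n} (hj : 𝐞 j ∈ H) :
    vectorSpan ℝ (facet H j) = coordSpan {i | i ≠ j ∧ 𝐞 i + 𝐞 j ∈ H} := by
  rw [vectorSpan_eq_span_vsub_set_right ℝ (single_mem_facet hj)]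
  refine le_antisymm (span_le.mpr ?_) (span_le.mpr ?_)
  · rintro _ ⟨x, hx, rfl⟩
    refine mem_coordSpan.mpr fun i hi => ?_
    by_cases hij : i = j
    · subst hij
      simp [hx.2]
    · simp [hij, h.facet_apply_eq_zero j hj x hx i hij fun hmem => hi ⟨hij, hmem⟩]
  · rintro _ ⟨i, ⟨hij, hi⟩, rfl⟩
    exact subset_span ⟨𝐞 i + 𝐞 j, ⟨hi, by simp [hij]⟩, by simp⟩

theorem affineSpan_facet (h : StdHannerShape H) {j : Fin n} (hj : 𝐞 j ∈ H) :
    affineSpan ℝ (facet H j) =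
      AffineSubspace.mk' (𝐞 j) (coordSpan {i | i ≠ j ∧ 𝐞 i + 𝐞 j ∈ H}) := by
  rw [← h.vectorSpan_facet hj, ← direction_affineSpan,
    AffineSubspace.mk'_eq (mem_affineSpan ℝ (single_mem_facet hj))]

theorem centroid_facet (h : StdHannerShape H) {j : Fin n} (hj : 𝐞 j ∈ H) :
    centroid (facet H j) = 𝐞 j := by
  refine centroid_eq_of_symmetric ?_ ?_ (single_mem_facet hj) fun x hx => ?_
  · exact fun x hx y hy a b ha hb hab =>
      ⟨h.convex hx.1 hy.1 ha hb hab, by simp [hx.2, hy.2, hab]⟩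
  · exact h.isCompact.inter_right (isClosed_eq (by fun_prop) continuous_const)
  · have hflip : signFlip {j}ᶜ x = 2 • 𝐞 j - x := by
      ext i
      by_cases hij : i = j
      · subst hij
        norm_num [hx.2]
      · simp [hij]
    exact ⟨hflip ▸ h.signFlip_mem _ x hx.1, by norm_num [hx.2]⟩

end StdHannerShape

section Segment

variable {k : Fin n}

theorem mem_stdSeg {x : Euc n} : x ∈ stdSeg k ↔ |x k| ≤ 1 ∧ ∀ i ≠ k, x i = 0 := by
  constructor
  · rintro ⟨u, v, hu, hv, huv, rfl⟩
    refine ⟨?_, fun i hi => by simp [hi]⟩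
    simp only [PiLp.add_apply, PiLp.smul_apply, PiLp.neg_apply, PiLp.single_apply, if_true,
      smul_eq_mul]
    rw [abs_le]
    constructor <;> linarith
  · rintro ⟨hk, h0⟩
    obtain ⟨hk₁, hk₂⟩ := abs_le.mp hk
    refine ⟨(1 - x k) / 2, (1 + x k) / 2, by linarith, by linarith, by ring, ?_⟩
    ext i
    by_cases hi : i = k
    · subst hi
      simp only [PiLp.add_apply, PiLp.smul_apply, PiLp.neg_apply, PiLp.single_apply, if_true,
        smul_eq_mul]
      ring
    · simp [hi, h0 i hi]

theorem single_mem_stdSeg {i : Fin n} : 𝐞 i ∈ stdSeg k ↔ i = k := by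
  refine ⟨fun hi => by_contra fun hik => ?_, fun hik => mem_stdSeg.mpr ⟨by simp [hik], ?_⟩⟩
  · simpa using (mem_stdSeg.mp hi).2 i hik
  · rintro l hl
    simp [hik, hl]

theorem facet_stdSeg : facet (stdSeg k) k = {𝐞 k} := by
  ext x
  refine ⟨fun ⟨hx, hxk⟩ => ?_, by rintro rfl; exact single_mem_facet (single_mem_stdSeg.mpr rfl)⟩
  ext i
  by_cases hi : i = k
  · subst hi
    simp [hxk]
  · simp [hi, (mem_stdSeg.mp hx).2 i hi]

theorem stdHannerShape_stdSeg (k : Fin n) : StdHannerShape (stdSeg k) where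
  convex := convex_segment _ _
  isCompact := by
    rw [stdSeg, ← convexHull_pair]
    exact (Set.toFinite _).isCompact_convexHull ℝ
  zero_mem := mem_stdSeg.mpr ⟨by simp, fun _ _ => rfl⟩
  signFlip_mem s x hx := by
    rw [mem_stdSeg] at hx ⊢
    refine ⟨?_, fun i hi => by simp [hx.2 i hi]⟩
    by_cases hk : k ∈ s <;> simp [hk, hx.1]
  apply_le_one x hx i := by
    rw [mem_stdSeg] at hx
    by_cases hi : i = k
    · subst hi
      exact (abs_le.mp hx.1).2
    · simp [hx.2 i hi]
  apply_eq_zero i hi x hx := (mem_stdSeg.mp hx).2 i (mt single_mem_stdSeg.mpr hi)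
  facet_apply_eq_zero j hj x hx i hi _ := by
    rw [single_mem_stdSeg] at hj
    subst hj
    exact (mem_stdSeg.mp hx.1).2 i hi

theorem facetFormula_stdSeg {A : Set (Euc n) → Set (Euc n)} (hA : A {𝐞 k} = {𝐞 k}) :
    FacetFormula (stdSeg k) A := by
  intro j hj
  rw [single_mem_stdSeg] at hj
  subst hj
  have hnone : adjacent (stdSeg j) j = ∅ := by
    ext i
    simp only [adjacent, single_mem_stdSeg, Set.mem_ofPred_eq, Set.mem_empty_iff_false, iff_false]
    tauto
  rw [facet_stdSeg, hA, hnone, coordSpan, Set.image_empty, span_empty, bot_coe,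
    Set.singleton_add_singleton, add_zero]

end Segment

variable {H₁ H₂ : Set (Euc n)} {A A₁ A₂ : Set (Euc n) → Set (Euc n)} {j : Fin n}

theorem disjoint_setOf_single_mem {U₁ U₂ : Set (Euc n)} (hspan : span ℝ U₁ ⊓ span ℝ U₂ = ⊥)
    (h₁ : H₁ ⊆ U₁) (h₂ : H₂ ⊆ U₂) : Disjoint {i | 𝐞 i ∈ H₁} {i | 𝐞 i ∈ H₂} := by
  refine Set.disjoint_left.mpr fun i hi₁ hi₂ => ?_
  have := disjoint_def.mp (disjoint_iff.mpr hspan) _ (subset_span (h₁ hi₁)) (subset_span (h₂ hi₂))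
  simp at this

theorem disjoint_setOf_single_mem_of_span_union {H₁' H₂' : Set (Euc n)}
    (hspan : span ℝ (H₁ ∪ H₁') ⊓ span ℝ (H₂ ∪ H₂') = ⊥) :
    Disjoint {i | 𝐞 i ∈ H₁} {i | 𝐞 i ∈ H₂} ∧ Disjoint {i | 𝐞 i ∈ H₁'} {i | 𝐞 i ∈ H₂'} :=
  ⟨disjoint_setOf_single_mem hspan Set.subset_union_left Set.subset_union_left,
    disjoint_setOf_single_mem hspan Set.subset_union_right Set.subset_union_right⟩

theorem singleton_add_coordSpan_add_coordSpan (p : Euc n) (s t : Set (Fin n)) :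
    {p} + (coordSpan s : Set (Euc n)) + (coordSpan t : Set (Euc n)) =
      {p} + (coordSpan (s ∪ t) : Set (Euc n)) := by
  rw [add_assoc, ← coe_sup, coordSpan_sup]

theorem apply_eq_zero_of_mem_convexHull_union (h₁ : StdHannerShape H₁)
    (h₂ : StdHannerShape H₂) {i : Fin n} (hi₁ : 𝐞 i ∉ H₁) (hi₂ : 𝐞 i ∉ H₂) {x : Euc n}
    (hx : x ∈ convexHull ℝ (H₁ ∪ H₂)) : x i = 0 :=
  convexHull_min (Set.union_subset (h₁.apply_eq_zero i hi₁) (h₂.apply_eq_zero i hi₂))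
    (convex_hyperplane (EuclideanSpace.proj i).isLinear 0) hx

theorem single_mem_convexHull_union (h₁ : StdHannerShape H₁) (h₂ : StdHannerShape H₂)
    {i : Fin n} : 𝐞 i ∈ convexHull ℝ (H₁ ∪ H₂) ↔ 𝐞 i ∈ H₁ ∨ 𝐞 i ∈ H₂ := by
  refine ⟨fun hi => by_contra fun hn => ?_, fun hi => subset_convexHull ℝ _ hi⟩
  rw [not_or] at hn
  simpa using apply_eq_zero_of_mem_convexHull_union h₁ h₂ hn.1 hn.2 hi

theorem facet_convexHull_union (h₁ : StdHannerShape H₁) (h₂ : StdHannerShape H₂)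
    (hj : 𝐞 j ∉ H₂) : facet (convexHull ℝ (H₁ ∪ H₂)) j = facet H₁ j := by
  ext x
  refine ⟨fun ⟨hx, hxj⟩ => ?_, fun ⟨hx, hxj⟩ => ⟨subset_convexHull ℝ _ (Or.inl hx), hxj⟩⟩
  rw [h₁.convex.convexHull_union h₂.convex ⟨0, h₁.zero_mem⟩ ⟨0, h₂.zero_mem⟩,
    mem_convexJoin] at hx
  obtain ⟨a, ha, b, hb, u, v, hu, hv, huv, rfl⟩ := hx
  have haj := h₁.apply_le_one a ha j
  simp only [PiLp.add_apply, PiLp.smul_apply, h₂.apply_eq_zero j hj b hb, smul_eq_mul,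
    mul_zero, add_zero] at hxj
  -- `x j = u * a j` with `u ≤ 1` and `a j ≤ 1` forces all the weight onto `a`
  obtain ⟨rfl, rfl⟩ : u = 1 ∧ v = 0 := by constructor <;> nlinarith
  rw [one_smul, zero_smul, add_zero]
  exact ⟨ha, by simpa using hxj⟩

theorem StdHannerShape.convexHull_union (h₁ : StdHannerShape H₁) (h₂ : StdHannerShape H₂)
    (hd : Disjoint {i | 𝐞 i ∈ H₁} {i | 𝐞 i ∈ H₂}) :
    StdHannerShape (convexHull ℝ (H₁ ∪ H₂)) where
  convex := convex_convexHull ℝ _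
  isCompact := by
    rw [h₁.convex.convexHull_union h₂.convex ⟨0, h₁.zero_mem⟩ ⟨0, h₂.zero_mem⟩]
    exact h₁.isCompact.convexJoin h₂.isCompact
  zero_mem := subset_convexHull ℝ _ (Or.inl h₁.zero_mem)
  signFlip_mem s := convexHull_min
    (Set.union_subset (fun x hx => subset_convexHull ℝ _ (Or.inl (h₁.signFlip_mem s x hx)))
      (fun x hx => subset_convexHull ℝ _ (Or.inr (h₂.signFlip_mem s x hx))))
    ((convex_convexHull ℝ _).linear_preimage _)
  apply_le_one x hx i := convexHull_min
    (Set.union_subset (fun y hy => h₁.apply_le_one y hy i) (fun y hy => h₂.apply_le_one y hy i))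
    (convex_halfSpace_le (EuclideanSpace.proj i).isLinear 1) hx
  apply_eq_zero i hi x hx := by
    rw [single_mem_convexHull_union h₁ h₂, not_or] at hi
    exact apply_eq_zero_of_mem_convexHull_union h₁ h₂ hi.1 hi.2 hx
  facet_apply_eq_zero j hj x hx i hij hi := by
    rcases (single_mem_convexHull_union h₁ h₂).mp hj with hj₁ | hj₂
    · rw [facet_convexHull_union h₁ h₂ (hd.notMem_of_mem_left hj₁)] at hx
      exact h₁.facet_apply_eq_zero j hj₁ x hx i hij
        fun hmem => hi (subset_convexHull ℝ _ (Or.inl hmem))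
    · rw [Set.union_comm, facet_convexHull_union h₂ h₁ (hd.notMem_of_mem_right hj₂)] at hx
      exact h₂.facet_apply_eq_zero j hj₂ x hx i hij
        fun hmem => hi (subset_convexHull ℝ _ (Or.inr hmem))

theorem adjacent_convexHull_union (h₁ : StdHannerShape H₁) (h₂ : StdHannerShape H₂)
    (hd : Disjoint {i | 𝐞 i ∈ H₁} {i | 𝐞 i ∈ H₂}) (hj : 𝐞 j ∈ H₁) :
    adjacent (convexHull ℝ (H₁ ∪ H₂)) j = adjacent H₁ j ∪ {i | 𝐞 i ∈ H₂} := by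
  have hmem : ∀ i ≠ j, 𝐞 i + 𝐞 j ∈ convexHull ℝ (H₁ ∪ H₂) ↔ 𝐞 i + 𝐞 j ∈ H₁ := fun i hij => by
    have hE := congrArg (𝐞 i + 𝐞 j ∈ ·)
      (facet_convexHull_union h₁ h₂ (hd.notMem_of_mem_left hj))
    simpa [facet, hij] using hE
  ext i
  simp only [adjacent, Set.mem_ofPred_eq, Set.mem_union, single_mem_convexHull_union h₁ h₂]
  constructor
  · rintro ⟨hij, hi | hi, hn⟩
    · exact Or.inl ⟨hij, hi, (hmem i hij).not.mp hn⟩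
    · exact Or.inr hi
  · rintro (⟨hij, hi, hn⟩ | hi)
    · exact ⟨hij, Or.inl hi, (hmem i hij).not.mpr hn⟩
    have hij : i ≠ j := fun h => hd.notMem_of_mem_left hj (h ▸ hi)
    refine ⟨hij, Or.inr hi, fun hn => ?_⟩
    simpa [hij] using h₁.apply_eq_zero i (hd.notMem_of_mem_right hi) _ ((hmem i hij).mp hn)

theorem FacetFormula.convexHull_union_of_mem_left (hA₁ : FacetFormula H₁ A₁)
    (h₁ : StdHannerShape H₁) (h₂ : StdHannerShape H₂)
    (hd : Disjoint {i | 𝐞 i ∈ H₁} {i | 𝐞 i ∈ H₂})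
    (hA : ∀ F, IsFaceIn (span ℝ H₁) H₁ F → A F = A₁ F + (span ℝ H₂ : Set (Euc n)))
    (hj : 𝐞 j ∈ H₁) :
    A (facet (convexHull ℝ (H₁ ∪ H₂)) j) =
      {𝐞 j} + (coordSpan (adjacent (convexHull ℝ (H₁ ∪ H₂)) j) : Set (Euc n)) := by
  rw [facet_convexHull_union h₁ h₂ (hd.notMem_of_mem_left hj), hA _ (h₁.isFaceIn_facet hj),
    hA₁ j hj, h₂.span_eq_coordSpan, singleton_add_coordSpan_add_coordSpan,
    adjacent_convexHull_union h₁ h₂ hd hj]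

theorem FacetFormula.convexHull_union (hA₁ : FacetFormula H₁ A₁) (hA₂ : FacetFormula H₂ A₂)
    (h₁ : StdHannerShape H₁) (h₂ : StdHannerShape H₂)
    (hd : Disjoint {i | 𝐞 i ∈ H₁} {i | 𝐞 i ∈ H₂}) (hA : L1Rules H₁ H₂ A₁ A₂ A) :
    FacetFormula (convexHull ℝ (H₁ ∪ H₂)) A := by
  intro j hj
  rcases (single_mem_convexHull_union h₁ h₂).mp hj with hj₁ | hj₂
  · exact hA₁.convexHull_union_of_mem_left h₁ h₂ hd hA.1 hj₁
  · rw [Set.union_comm H₁ H₂]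
    exact hA₂.convexHull_union_of_mem_left h₂ h₁ hd.symm
      (fun F hF => by rw [hA.2.1 F hF, add_comm]) hj₂

theorem single_mem_add (h₁ : StdHannerShape H₁) (h₂ : StdHannerShape H₂) {i : Fin n} :
    𝐞 i ∈ H₁ + H₂ ↔ 𝐞 i ∈ H₁ ∨ 𝐞 i ∈ H₂ := by
  refine ⟨fun hi => by_contra fun hn => ?_, ?_⟩
  · rw [not_or] at hn
    obtain ⟨a, ha, b, hb, hab⟩ := hi
    have := congrArg (· i) hab
    simp [h₁.apply_eq_zero i hn.1 a ha, h₂.apply_eq_zero i hn.2 b hb] at this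
  · rintro (hi | hi)
    · exact Set.subset_add_left _ h₂.zero_mem hi
    · exact Set.subset_add_right _ h₁.zero_mem hi

theorem facet_add (h₂ : StdHannerShape H₂) (hj : 𝐞 j ∉ H₂) :
    facet (H₁ + H₂) j = facet H₁ j + H₂ := by
  ext x
  constructor
  · rintro ⟨⟨a, ha, b, hb, rfl⟩, hx⟩
    exact ⟨a, ⟨ha, by simpa [h₂.apply_eq_zero j hj b hb] using hx⟩, b, hb, rfl⟩
  · rintro ⟨a, ⟨ha, haj⟩, b, hb, rfl⟩
    exact ⟨Set.add_mem_add ha hb, by simp [haj, h₂.apply_eq_zero j hj b hb]⟩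

theorem mem_left_of_mem_add (h₁ : StdHannerShape H₁) (h₂ : StdHannerShape H₂)
    (hd : Disjoint {i | 𝐞 i ∈ H₁} {i | 𝐞 i ∈ H₂}) {x : Euc n}
    (hx : x ∈ H₁ + H₂) (hx₂ : ∀ i, 𝐞 i ∈ H₂ → x i = 0) : x ∈ H₁ := by
  obtain ⟨a, ha, b, hb, rfl⟩ := hx
  suffices b = 0 by simpa [this] using ha
  ext i
  by_cases hi : 𝐞 i ∈ H₂
  · simpa [h₁.apply_eq_zero i (hd.notMem_of_mem_right hi) a ha] using hx₂ i hi
  · exact h₂.apply_eq_zero i hi b hb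

theorem facet_apply_eq_zero_add_of_mem_left (h₁ : StdHannerShape H₁) (h₂ : StdHannerShape H₂)
    (hj₁ : 𝐞 j ∈ H₁) (hj₂ : 𝐞 j ∉ H₂) {x : Euc n} (hx : x ∈ facet (H₁ + H₂) j) {i : Fin n}
    (hij : i ≠ j) (hi : 𝐞 i + 𝐞 j ∉ H₁ + H₂) : x i = 0 := by
  obtain ⟨a, ha, b, hb, rfl⟩ := facet_add h₂ hj₂ ▸ hx
  have hai := h₁.facet_apply_eq_zero j hj₁ a ha i hij
    fun hmem => hi (Set.subset_add_left _ h₂.zero_mem hmem)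
  have hbi := h₂.apply_eq_zero i
    (fun hmem => hi (add_comm (𝐞 j) (𝐞 i) ▸ Set.add_mem_add hj₁ hmem)) b hb
  simp [hai, hbi]

theorem StdHannerShape.add (h₁ : StdHannerShape H₁) (h₂ : StdHannerShape H₂)
    (hd : Disjoint {i | 𝐞 i ∈ H₁} {i | 𝐞 i ∈ H₂}) : StdHannerShape (H₁ + H₂) where
  convex := h₁.convex.add h₂.convex
  isCompact := h₁.isCompact.add h₂.isCompact
  zero_mem := ⟨0, h₁.zero_mem, 0, h₂.zero_mem, add_zero 0⟩
  signFlip_mem := by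
    rintro s _ ⟨a, ha, b, hb, rfl⟩
    rw [map_add]
    exact Set.add_mem_add (h₁.signFlip_mem s a ha) (h₂.signFlip_mem s b hb)
  apply_le_one := by
    rintro _ ⟨a, ha, b, hb, rfl⟩ i
    by_cases hi : 𝐞 i ∈ H₁
    · simpa [h₂.apply_eq_zero i (hd.notMem_of_mem_left hi) b hb] using h₁.apply_le_one a ha i
    · simpa [h₁.apply_eq_zero i hi a ha] using h₂.apply_le_one b hb i
  apply_eq_zero := by
    rintro i hi _ ⟨a, ha, b, hb, rfl⟩
    rw [single_mem_add h₁ h₂, not_or] at hi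
    simp [h₁.apply_eq_zero i hi.1 a ha, h₂.apply_eq_zero i hi.2 b hb]
  facet_apply_eq_zero j hj x hx i hij hi := by
    rcases (single_mem_add h₁ h₂).mp hj with hj₁ | hj₂
    · exact facet_apply_eq_zero_add_of_mem_left h₁ h₂ hj₁ (hd.notMem_of_mem_left hj₁) hx hij hi
    · rw [add_comm H₁ H₂] at hx hi
      exact facet_apply_eq_zero_add_of_mem_left h₂ h₁ hj₂ (hd.notMem_of_mem_right hj₂) hx hij hi

theorem adjacent_add (h₁ : StdHannerShape H₁) (h₂ : StdHannerShape H₂)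
    (hd : Disjoint {i | 𝐞 i ∈ H₁} {i | 𝐞 i ∈ H₂}) (hj : 𝐞 j ∈ H₁) :
    adjacent (H₁ + H₂) j = adjacent H₁ j := by
  ext i
  simp only [adjacent, Set.mem_ofPred_eq, single_mem_add h₁ h₂]
  constructor
  · rintro ⟨hij, hi | hi, hn⟩
    · exact ⟨hij, hi, fun hmem => hn (Set.subset_add_left _ h₂.zero_mem hmem)⟩
    · exact absurd (add_comm (𝐞 j) (𝐞 i) ▸ Set.add_mem_add hj hi) hn
  · rintro ⟨hij, hi, hn⟩
    refine ⟨hij, Or.inl hi, fun hmem => hn (mem_left_of_mem_add h₁ h₂ hd hmem fun k hk => ?_)⟩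
    have hki : k ≠ i := fun h => hd.notMem_of_mem_left hi (h ▸ hk)
    have hkj : k ≠ j := fun h => hd.notMem_of_mem_left hj (h ▸ hk)
    simp [hki, hkj]

theorem FacetFormula.add_of_mem_left (hA₁ : FacetFormula H₁ A₁) (h₁ : StdHannerShape H₁)
    (h₂ : StdHannerShape H₂) (hd : Disjoint {i | 𝐞 i ∈ H₁} {i | 𝐞 i ∈ H₂})
    (hA : ∀ F, IsFaceIn (span ℝ H₁) H₁ F → A (F + H₂) = A₁ F) (hj : 𝐞 j ∈ H₁) :
    A (facet (H₁ + H₂) j) = {𝐞 j} + (coordSpan (adjacent (H₁ + H₂) j) : Set (Euc n)) := by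
  rw [facet_add h₂ (hd.notMem_of_mem_left hj), hA _ (h₁.isFaceIn_facet hj), hA₁ j hj,
    adjacent_add h₁ h₂ hd hj]

theorem FacetFormula.add (hA₁ : FacetFormula H₁ A₁) (hA₂ : FacetFormula H₂ A₂)
    (h₁ : StdHannerShape H₁) (h₂ : StdHannerShape H₂)
    (hd : Disjoint {i | 𝐞 i ∈ H₁} {i | 𝐞 i ∈ H₂}) (hA : LInfRules H₁ H₂ A₁ A₂ A) :
    FacetFormula (H₁ + H₂) A := by
  intro j hj
  rcases (single_mem_add h₁ h₂).mp hj with hj₁ | hj₂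
  · exact hA₁.add_of_mem_left h₁ h₂ hd hA.1 hj₁
  · rw [add_comm H₁ H₂]
    exact hA₂.add_of_mem_left h₂ h₁ hd.symm (fun F hF => by rw [add_comm, hA.2.1 F hF]) hj₂

theorem StdHannerRep.stdHannerShape {H H' : Set (Euc n)} {A A' : Set (Euc n) → Set (Euc n)}
    (h : StdHannerRep H A H' A') : StdHannerShape H ∧ StdHannerShape H' := by
  induction h with
  | seg k => exact ⟨stdHannerShape_stdSeg k, stdHannerShape_stdSeg k⟩
  | l1 _ _ hspan _ _ ih₁ ih₂ =>
    obtain ⟨hd, hd'⟩ := disjoint_setOf_single_mem_of_span_union hspan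
    exact ⟨ih₁.1.convexHull_union ih₂.1 hd, ih₁.2.add ih₂.2 hd'⟩
  | linf _ _ hspan _ _ ih₁ ih₂ =>
    obtain ⟨hd, hd'⟩ := disjoint_setOf_single_mem_of_span_union hspan
    exact ⟨ih₁.1.add ih₂.1 hd, ih₁.2.convexHull_union ih₂.2 hd'⟩

theorem StdHannerRep.facetFormula {H H' : Set (Euc n)} {A A' : Set (Euc n) → Set (Euc n)}
    (h : StdHannerRep H A H' A') : FacetFormula H A ∧ FacetFormula H' A' := by
  induction h with
  | seg k _ _ hA _ hA' _ => exact ⟨facetFormula_stdSeg hA, facetFormula_stdSeg hA'⟩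
  | l1 h₁ h₂ hspan hA hA' ih₁ ih₂ =>
    obtain ⟨⟨s₁, s₁'⟩, ⟨s₂, s₂'⟩⟩ := And.intro h₁.stdHannerShape h₂.stdHannerShape
    obtain ⟨hd, hd'⟩ := disjoint_setOf_single_mem_of_span_union hspan
    exact ⟨ih₁.1.convexHull_union ih₂.1 s₁ s₂ hd hA, ih₁.2.add ih₂.2 s₁' s₂' hd' hA'⟩
  | linf h₁ h₂ hspan hA hA' ih₁ ih₂ =>
    obtain ⟨⟨s₁, s₁'⟩, ⟨s₂, s₂'⟩⟩ := And.intro h₁.stdHannerShape h₂.stdHannerShape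
    obtain ⟨hd, hd'⟩ := disjoint_setOf_single_mem_of_span_union hspan
    exact ⟨ih₁.1.add ih₂.1 s₁ s₂ hd hA, ih₁.2.convexHull_union ih₂.2 s₁' s₂' hd' hA'⟩

end

/-- **Lemma 6.2.** For a standard Hanner polytope `H` and `E_j = H ∩ (e_j + e_j^⊥)` (a face
of `H` with centroid `e_j`), the affine hull of `E_j` is `e_j + span{e_i : i ≁ j}` and the
associated affine subspace is `A_{E_j} = e_j + span{e_i : i ∼ j}`, where `i ∼ j` means
`e_i + e_j ∉ H`. -/
theorem aff_and_subspace_of_facet_Ej (n : ℕ) (H H' : Set (Euc n))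
    (A A' : Set (Euc n) → Set (Euc n)) (hH : StdHannerRep H A H' A')
    (hspan : Submodule.span ℝ H = ⊤) (j : Fin n) :
    IsFaceOf H {x ∈ H | ⟪x, EuclideanSpace.single j (1 : ℝ)⟫ = 1} ∧
    centroid {x ∈ H | ⟪x, EuclideanSpace.single j (1 : ℝ)⟫ = 1} =
      EuclideanSpace.single j (1 : ℝ) ∧
    (affineSpan ℝ {x ∈ H | ⟪x, EuclideanSpace.single j (1 : ℝ)⟫ = 1} : Set (Euc n)) =
      {EuclideanSpace.single j (1 : ℝ)} +
        (Submodule.span ℝ {x : Euc n | ∃ i : Fin n, i ≠ j ∧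
          EuclideanSpace.single i (1 : ℝ) + EuclideanSpace.single j (1 : ℝ) ∈ H ∧
          x = EuclideanSpace.single i (1 : ℝ)} : Set (Euc n)) ∧
    A {x ∈ H | ⟪x, EuclideanSpace.single j (1 : ℝ)⟫ = 1} =
      {EuclideanSpace.single j (1 : ℝ)} +
        (Submodule.span ℝ {x : Euc n | ∃ i : Fin n, i ≠ j ∧
          EuclideanSpace.single i (1 : ℝ) + EuclideanSpace.single j (1 : ℝ) ∉ H ∧
          x = EuclideanSpace.single i (1 : ℝ)} : Set (Euc n)) := by
  have hshape := hH.stdHannerShape.1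
  have hmem := hshape.single_mem_of_span_eq_top hspan
  rw [← facet_eq_setOf_inner]
  refine ⟨(hshape.isFaceIn_facet (hmem j)).mono le_top, hshape.centroid_facet (hmem j), ?_, ?_⟩
  · rw [hshape.affineSpan_facet (hmem j), AffineSubspace.coe_mk'_eq_singleton_add]
    simp only [← and_assoc, span_setOf_single]
  · rw [hH.facetFormula.1 j (hmem j)]
    simp only [adjacent, ← and_assoc, span_setOf_single, hmem, true_and]
end

section
/- Let v be a vertex of a standard Hanner polytope H in ℝⁿ, and let A_v be the affine subspace associated to the zero-dimensional face {v}. Then A_v ∩ ℝ^(v) equals the orthogonal projection of A_v onto ℝ^(v), where ℝ^(v) = span{e_j : ⟨v, e_j⟩ ≠ 0}. -/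
open MeasureTheory Set Submodule
open scoped RealInnerProductSpace Pointwise Classical

/-!
A standard Hanner polytope `H` spans a coordinate subspace `ℝ^s`, and for every vertex `v` the
subspace `A_v` splits as `X + W` with `X ⊆ ℝ^(v)` and `W` a linear subspace of `ℝ^s` orthogonal
to `ℝ^(v)`; for such a set both the section by `ℝ^(v)` and the projection onto `ℝ^(v)` are `X`.
The splitting is carried along the recursive construction. A vertex of `H₁ ⊕₁ H₂` is a vertex
of one summand, say `H₁`, and the extra summand `span H₂` of `A_v` lives in coordinates where
`v` vanishes. A vertex of `H₁ ⊕∞ H₂` is a sum `v₁ + v₂` of vertices with disjoint supports, so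
`ℝ^(v₁), ℝ^(v₂) ⊆ ℝ^(v)`, and the extra line of `A_v` is spanned by a combination of `v₁`
and `v₂`.
-/

section Faces

variable {n : ℕ}

theorem isFaceIn_singleton_iff {V : Submodule ℝ (Euc n)} {P : Set (Euc n)} {v : Euc n} :
    IsFaceIn V P {v} ↔
      P ≠ {v} ∧ v ∈ P ∧ ∃ u ∈ V, u ≠ 0 ∧ ∀ x ∈ P, x ≠ v → ⟪x, u⟫ < ⟪v, u⟫ := by
  constructor
  · rintro ⟨u, b, huV, hu, hle, -, hF, hne⟩
    have hF' : ∀ x, x = v ↔ x ∈ P ∧ ⟪x, u⟫ = b := fun x => Set.ext_iff.1 hF x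
    obtain ⟨hv, hvb⟩ := (hF' v).1 rfl
    refine ⟨hne.symm, hv, u, huV, hu, fun x hx hxv => ?_⟩
    exact hvb ▸ (hle x hx).lt_of_ne fun hxb => hxv ((hF' x).2 ⟨hx, hxb⟩)
  · rintro ⟨hne, hv, u, huV, hu, hlt⟩
    refine ⟨u, ⟪v, u⟫, huV, hu, fun x hx => ?_, ⟨v, hv, rfl⟩, ?_, hne.symm⟩
    · rcases eq_or_ne x v with rfl | hxv
      exacts [le_rfl, (hlt x hx hxv).le]
    · ext x
      refine ⟨fun hx => ⟨hx ▸ hv, hx ▸ rfl⟩, fun ⟨hx, hxu⟩ => ?_⟩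
      by_contra hxv
      exact (hlt x hx hxv).ne hxu

theorem IsFaceIn.mem_of_singleton {V : Submodule ℝ (Euc n)} {P : Set (Euc n)} {v : Euc n}
    (h : IsFaceIn V P {v}) : v ∈ P :=
  (isFaceIn_singleton_iff.1 h).2.1

theorem IsFaceIn.to_span {V : Submodule ℝ (Euc n)} {P F : Set (Euc n)} (h : IsFaceIn V P F) :
    IsFaceIn (span ℝ P) P F := by
  obtain ⟨u, b, -, hu, hle, ⟨x₀, hx₀, hx₀b⟩, hF, hne⟩ := h
  set u₁ := (span ℝ P).starProjection u
  have hinner : ∀ x ∈ P, ⟪x, u₁⟫ = ⟪x, u⟫ := fun x hx => by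
    rw [← inner_starProjection_left_eq_right, starProjection_eq_self_iff.2 (subset_span hx)]
  refine ⟨u₁, b, starProjection_apply_mem _ _, fun hu₁ => hne ?_,
    fun x hx => hinner x hx ▸ hle x hx, ⟨x₀, hx₀, (hinner x₀ hx₀).trans hx₀b⟩, ?_, hne⟩
  · -- if `u₁ = 0`, then `⟪·, u⟫` is constant on `P`, so the face would be all of `P`
    rw [hF, Set.sep_eq_self_iff_mem_true]
    intro x hx
    rw [← hinner x hx, hu₁, inner_zero_right, ← hx₀b, ← hinner x₀ hx₀, hu₁, inner_zero_right]
  · rw [hF]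
    ext x
    exact and_congr_right fun hx => by rw [hinner x hx]

theorem IsFaceIn.of_subset {V : Submodule ℝ (Euc n)} {P Q : Set (Euc n)} {v : Euc n}
    (h : IsFaceIn V Q {v}) (hPQ : P ⊆ Q) (hv : v ∈ P) (hP : P ≠ {v}) : IsFaceIn V P {v} := by
  obtain ⟨-, -, u, huV, hu, hlt⟩ := isFaceIn_singleton_iff.1 h
  exact isFaceIn_singleton_iff.2 ⟨hP, hv, u, huV, hu, fun x hx => hlt x (hPQ hx)⟩

theorem IsFaceIn.mem_of_convexHull {V : Submodule ℝ (Euc n)} {s : Set (Euc n)} {v : Euc n}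
    (h : IsFaceIn V (convexHull ℝ s) {v}) : v ∈ s := by
  obtain ⟨-, hv, u, -, -, hlt⟩ := isFaceIn_singleton_iff.1 h
  by_contra hvs
  have hhull : convexHull ℝ s ⊆ {x | ⟪u, x⟫ < ⟪u, v⟫} :=
    convexHull_min (fun x hx => show ⟪u, x⟫ < ⟪u, v⟫ by
        simpa only [real_inner_comm u] using
          hlt x (subset_convexHull ℝ s hx) (ne_of_mem_of_not_mem hx hvs))
      (convex_halfSpace_lt (innerₛₗ ℝ u).isLinear _)
  exact (show ⟪u, v⟫ < ⟪u, v⟫ from hhull hv).false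

theorem IsFaceIn.exists_add {V : Submodule ℝ (Euc n)} {P Q : Set (Euc n)} {v : Euc n}
    (h : IsFaceIn V (P + Q) {v}) (hP : P.Nontrivial) (hQ : Q.Nontrivial) :
    ∃ p q, p + q = v ∧ IsFaceIn V P {p} ∧ IsFaceIn V Q {q} := by
  obtain ⟨-, ⟨p, hp, q, hq, rfl⟩, u, huV, hu, hlt⟩ := isFaceIn_singleton_iff.1 h
  refine ⟨p, q, rfl, isFaceIn_singleton_iff.2 ⟨hP.ne_singleton, hp, u, huV, hu, fun x hx hxp => ?_⟩,
    isFaceIn_singleton_iff.2 ⟨hQ.ne_singleton, hq, u, huV, hu, fun y hy hyq => ?_⟩⟩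
  · have := hlt (x + q) (add_mem_add hx hq) ((add_left_injective q).ne hxp)
    rw [inner_add_left, inner_add_left] at this
    linarith
  · have := hlt (p + y) (add_mem_add hp hy) ((add_right_injective p).ne hyq)
    rw [inner_add_left, inner_add_left] at this
    linarith

end Faces

section Coordinates

variable {n : ℕ}

def coordSubspace (s : Set (Fin n)) : Submodule ℝ (Euc n) :=
  span ℝ ((fun j => EuclideanSpace.single j (1 : ℝ)) '' s)

theorem mem_coordSubspace {s : Set (Fin n)} {x : Euc n} :
    x ∈ coordSubspace s ↔ ∀ j ∉ s, x j = 0 := by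
  have hspan := (EuclideanSpace.basisFun (Fin n) ℝ).toBasis.mem_span_image (m := x) (s := s)
  simp only [OrthonormalBasis.coe_toBasis, EuclideanSpace.basisFun_apply] at hspan
  rw [coordSubspace, hspan]
  simp [Set.subset_def, not_imp_comm]

theorem coordSubspace_mono {s t : Set (Fin n)} (h : s ⊆ t) : coordSubspace s ≤ coordSubspace t :=
  span_mono (Set.image_mono h)

theorem coordSubspace_union (s t : Set (Fin n)) :
    coordSubspace (s ∪ t) = coordSubspace s ⊔ coordSubspace t := by
  rw [coordSubspace, Set.image_union, span_union]; rfl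

theorem coordSubspace_singleton (j : Fin n) :
    coordSubspace {j} = span ℝ {EuclideanSpace.single j (1 : ℝ)} := by
  rw [coordSubspace, Set.image_singleton]

theorem single_mem_coordSubspace {s : Set (Fin n)} {j : Fin n} (hj : j ∈ s) :
    EuclideanSpace.single j (1 : ℝ) ∈ coordSubspace s :=
  subset_span (Set.mem_image_of_mem _ hj)

theorem orthogonal_coordSubspace (s : Set (Fin n)) : (coordSubspace s)ᗮ = coordSubspace sᶜ := by
  refine le_antisymm (fun y hy => mem_coordSubspace.2 fun j hj => ?_) ?_
  · simpa [EuclideanSpace.inner_single_left] using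
      (mem_orthogonal _ _).1 hy _ (single_mem_coordSubspace (not_not.1 hj))
  · refine (isOrtho_iff_le.1 (isOrtho_span.2 ?_))
    rintro _ ⟨i, hi, rfl⟩ _ ⟨j, hj, rfl⟩
    simp [EuclideanSpace.inner_single_left, ne_of_mem_of_not_mem hj hi]

theorem disjoint_of_disjoint_coordSubspace {s t : Set (Fin n)}
    (h : Disjoint (coordSubspace s) (coordSubspace t)) : Disjoint s t :=
  Set.disjoint_left.2 fun j hs ht => by
    simpa using disjoint_def.1 h _ (single_mem_coordSubspace hs) (single_mem_coordSubspace ht)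

theorem suppSpan_eq_coordSubspace (v : Euc n) : suppSpan v = coordSubspace {j | v j ≠ 0} := by
  rw [suppSpan, coordSubspace]
  congr 1
  ext x
  simp [eq_comm]

theorem self_mem_suppSpan (v : Euc n) : v ∈ suppSpan v := by
  rw [suppSpan_eq_coordSubspace, mem_coordSubspace]
  exact fun j hj => not_not.1 hj

theorem suppSpan_le_suppSpan_add {s t : Set (Fin n)} {p q : Euc n} (hp : p ∈ coordSubspace s)
    (hq : q ∈ coordSubspace t) (hst : Disjoint s t) : suppSpan p ≤ suppSpan (p + q) := by
  rw [suppSpan_eq_coordSubspace, suppSpan_eq_coordSubspace]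
  refine coordSubspace_mono fun j (hpj : p j ≠ 0) => ?_
  have hjs : j ∈ s := by_contra fun hjs => hpj (mem_coordSubspace.1 hp j hjs)
  simpa [mem_coordSubspace.1 hq j (hst.notMem_of_mem_left hjs)] using hpj

end Coordinates

section Splitting

variable {n : ℕ}

theorem add_inter_eq_self {V W : Submodule ℝ (Euc n)} {X : Set (Euc n)} (hX : X ⊆ V)
    (hW : W ≤ Vᗮ) : (X + W) ∩ V = X := by
  refine Set.Subset.antisymm ?_ fun x hx => ⟨⟨x, hx, 0, W.zero_mem, add_zero x⟩, hX hx⟩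
  rintro _ ⟨⟨x, hx, w, hw, rfl⟩, hxw⟩
  have hwV : w ∈ V := by simpa using V.sub_mem hxw (hX hx)
  obtain rfl : w = 0 := disjoint_def.1 V.orthogonal_disjoint w hwV (hW hw)
  simpa using hx

theorem projSet_add_eq_self {V W : Submodule ℝ (Euc n)} {X : Set (Euc n)} (hX : X ⊆ V)
    (hW : W ≤ Vᗮ) : projSet V (X + W) = X := by
  have hproj : ∀ x ∈ X, ∀ w ∈ W, V.starProjection (x + w) = x := fun x hx w hw => by
    rw [map_add, starProjection_eq_self_iff.2 (hX hx),
      (starProjection_apply_eq_zero_iff V).2 (hW hw), add_zero]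
  refine Set.Subset.antisymm ?_ fun x hx =>
    ⟨x + 0, add_mem_add hx W.zero_mem, hproj x hx 0 W.zero_mem⟩
  rintro _ ⟨_, ⟨x, hx, w, hw, rfl⟩, rfl⟩
  show V.starProjection (x + w) ∈ X
  rwa [hproj x hx w hw]

def SuppSplit (s : Set (Fin n)) (v : Euc n) (B : Set (Euc n)) : Prop :=
  ∃ (X : Set (Euc n)) (W : Submodule ℝ (Euc n)),
    B = X + W ∧ X ⊆ suppSpan v ∧ W ≤ coordSubspace (s ∩ {j | v j = 0})

theorem SuppSplit.singleton (s : Set (Fin n)) (v : Euc n) : SuppSplit s v {v} :=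
  ⟨{v}, ⊥, by simp, Set.singleton_subset_iff.2 (self_mem_suppSpan v), bot_le⟩

theorem SuppSplit.add_coordSubspace {s t : Set (Fin n)} {v : Euc n} {B : Set (Euc n)}
    (h : SuppSplit s v B) (ht : ∀ j ∈ t, v j = 0) :
    SuppSplit (s ∪ t) v (B + coordSubspace t) := by
  obtain ⟨X, W, rfl, hX, hW⟩ := h
  refine ⟨X, W ⊔ coordSubspace t, by rw [coe_sup, add_assoc], hX, sup_le ?_ ?_⟩
  · exact hW.trans (coordSubspace_mono (Set.inter_subset_inter_left _ Set.subset_union_left))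
  · exact coordSubspace_mono fun j hj => ⟨Or.inr hj, ht j hj⟩

theorem SuppSplit.add {s t : Set (Fin n)} {p q : Euc n} {B C : Set (Euc n)}
    (hB : SuppSplit s p B) (hC : SuppSplit t q C) (hp : p ∈ coordSubspace s)
    (hq : q ∈ coordSubspace t) (hst : Disjoint s t) : SuppSplit (s ∪ t) (p + q) (B + C) := by
  obtain ⟨X, W, rfl, hX, hW⟩ := hB
  obtain ⟨Y, U, rfl, hY, hU⟩ := hC
  refine ⟨X + Y, W ⊔ U, by rw [coe_sup]; abel, ?_, sup_le (hW.trans ?_) (hU.trans ?_)⟩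
  · rintro _ ⟨x, hx, y, hy, rfl⟩
    exact add_mem (suppSpan_le_suppSpan_add hp hq hst (hX hx))
      (add_comm q p ▸ suppSpan_le_suppSpan_add hq hp hst.symm (hY hy))
  · refine coordSubspace_mono fun j ⟨hjs, (hpj : p j = 0)⟩ => ⟨Or.inl hjs, ?_⟩
    simp [hpj, mem_coordSubspace.1 hq j (hst.notMem_of_mem_left hjs)]
  · refine coordSubspace_mono fun j ⟨hjt, (hqj : q j = 0)⟩ => ⟨Or.inr hjt, ?_⟩
    simp [hqj, mem_coordSubspace.1 hp j (hst.notMem_of_mem_right hjt)]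

theorem SuppSplit.add_span_singleton {s : Set (Fin n)} {v w : Euc n} {B : Set (Euc n)}
    (h : SuppSplit s v B) (hw : w ∈ suppSpan v) : SuppSplit s v (B + span ℝ {w}) := by
  obtain ⟨X, W, rfl, hX, hW⟩ := h
  refine ⟨X + span ℝ {w}, W, by abel, ?_, hW⟩
  rintro _ ⟨x, hx, y, hy, rfl⟩
  exact add_mem (hX hx) (span_le.2 (Set.singleton_subset_iff.2 hw) hy)

theorem SuppSplit.inter_eq_projSet {s : Set (Fin n)} {v : Euc n} {B : Set (Euc n)}
    (h : SuppSplit s v B) : B ∩ suppSpan v = projSet (suppSpan v) B := by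
  obtain ⟨X, W, rfl, hX, hW⟩ := h
  have hW' : W ≤ (suppSpan v)ᗮ := by
    rw [suppSpan_eq_coordSubspace, orthogonal_coordSubspace]
    exact hW.trans (coordSubspace_mono fun j hj => not_not.2 hj.2)
  rw [add_inter_eq_self hX hW', projSet_add_eq_self hX hW']

end Splitting

section Invariant

variable {n : ℕ}

theorem span_convexHull (s : Set (Euc n)) : span ℝ (convexHull ℝ s) = span ℝ s :=
  le_antisymm (span_le.2 (convexHull_min subset_span (span ℝ s).convex))
    (span_mono (subset_convexHull ℝ s))

theorem span_add_of_zero_mem {s t : Set (Euc n)} (hs : (0 : Euc n) ∈ s) (ht : (0 : Euc n) ∈ t) :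
    span ℝ (s + t) = span ℝ s ⊔ span ℝ t := by
  refine le_antisymm (span_le.2 ?_) (sup_le (span_mono (subset_add_left s ht))
    (span_mono (subset_add_right t hs)))
  rintro _ ⟨x, hx, y, hy, rfl⟩
  exact add_mem (mem_sup_left (subset_span hx)) (mem_sup_right (subset_span hy))

theorem centroid_singleton (v : Euc n) : centroid ({v} : Set (Euc n)) = v := by
  have hdim : setDim ({v} : Set (Euc n)) = 0 := by
    rw [setDim, Set.singleton_sub_singleton, sub_self, span_zero_singleton, finrank_bot]
  rw [centroid, hdim, Nat.cast_zero, Measure.restrict_singleton,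
    Measure.hausdorffMeasure_zero_singleton, one_smul, integral_dirac]
  simp

structure StdHannerInvariant (H : Set (Euc n)) (A : Set (Euc n) → Set (Euc n))
    (s : Set (Fin n)) : Prop where
  zero_mem : (0 : Euc n) ∈ H
  nontrivial : H.Nontrivial
  span_eq : span ℝ H = coordSubspace s
  suppSplit : ∀ v, IsFaceOf H {v} → SuppSplit s v (A {v})

namespace StdHannerInvariant

variable {H H₁ H₂ : Set (Euc n)} {A A₁ A₂ : Set (Euc n) → Set (Euc n)} {s s₁ s₂ : Set (Fin n)}

theorem subset_coordSubspace (h : StdHannerInvariant H A s) : H ⊆ coordSubspace s :=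
  h.span_eq ▸ subset_span

theorem disjoint (h₁ : StdHannerInvariant H₁ A₁ s₁) (h₂ : StdHannerInvariant H₂ A₂ s₂)
    (hd : Disjoint (span ℝ H₁) (span ℝ H₂)) : Disjoint s₁ s₂ :=
  disjoint_of_disjoint_coordSubspace (h₁.span_eq ▸ h₂.span_eq ▸ hd)

theorem seg (j : Fin n)
    (hA₁ : A {EuclideanSpace.single j (1 : ℝ)} = {EuclideanSpace.single j (1 : ℝ)})
    (hA₂ : A {-EuclideanSpace.single j (1 : ℝ)} = {-EuclideanSpace.single j (1 : ℝ)}) :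
    StdHannerInvariant (stdSeg j) A {j} := by
  set e := EuclideanSpace.single j (1 : ℝ)
  have hseg : stdSeg j = convexHull ℝ {-e, e} := (convexHull_pair _ _).symm
  have h0 : (0 : Euc n) ∈ stdSeg j := ⟨1 / 2, 1 / 2, by norm_num, by norm_num, by norm_num, by simp⟩
  refine ⟨h0, ⟨0, h0, e, right_mem_segment ℝ _ _, by simp [e, eq_comm]⟩, ?_, fun v hv => ?_⟩
  · rw [hseg, span_convexHull, span_insert_eq_span (neg_mem (mem_span_singleton_self e)),
      coordSubspace_singleton]
  · rw [hseg] at hv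
    rcases IsFaceIn.mem_of_convexHull hv with rfl | rfl
    · rw [hA₂]; exact .singleton _ _
    · rw [hA₁]; exact .singleton _ _

theorem l1 (h₁ : StdHannerInvariant H₁ A₁ s₁) (h₂ : StdHannerInvariant H₂ A₂ s₂)
    (hd : Disjoint (span ℝ H₁) (span ℝ H₂)) (hA : L1Rules H₁ H₂ A₁ A₂ A) :
    StdHannerInvariant (convexHull ℝ (H₁ ∪ H₂)) A (s₁ ∪ s₂) where
  zero_mem := subset_convexHull ℝ _ (Or.inl h₁.zero_mem)
  nontrivial := h₁.nontrivial.mono (Set.subset_union_left.trans (subset_convexHull ℝ _))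
  span_eq := by rw [span_convexHull, span_union, h₁.span_eq, h₂.span_eq, coordSubspace_union]
  suppSplit v hv := by
    have hs := h₁.disjoint h₂ hd
    rcases IsFaceIn.mem_of_convexHull hv with hv₁ | hv₂
    · have hf : IsFaceOf H₁ {v} := IsFaceIn.of_subset hv
        (Set.subset_union_left.trans (subset_convexHull ℝ _)) hv₁ h₁.nontrivial.ne_singleton
      rw [hA.1 {v} hf.to_span, h₂.span_eq]
      exact (h₁.suppSplit v hf).add_coordSubspace fun j hj =>
        mem_coordSubspace.1 (h₁.subset_coordSubspace hv₁) j (hs.notMem_of_mem_right hj)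
    · have hf : IsFaceOf H₂ {v} := IsFaceIn.of_subset hv
        (Set.subset_union_right.trans (subset_convexHull ℝ _)) hv₂ h₂.nontrivial.ne_singleton
      rw [hA.2.1 {v} hf.to_span, h₁.span_eq, add_comm, Set.union_comm]
      exact (h₂.suppSplit v hf).add_coordSubspace fun j hj =>
        mem_coordSubspace.1 (h₂.subset_coordSubspace hv₂) j (hs.notMem_of_mem_left hj)

theorem linf (h₁ : StdHannerInvariant H₁ A₁ s₁) (h₂ : StdHannerInvariant H₂ A₂ s₂)
    (hd : Disjoint (span ℝ H₁) (span ℝ H₂)) (hA : LInfRules H₁ H₂ A₁ A₂ A) :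
    StdHannerInvariant (H₁ + H₂) A (s₁ ∪ s₂) where
  zero_mem := ⟨0, h₁.zero_mem, 0, h₂.zero_mem, add_zero 0⟩
  nontrivial := h₁.nontrivial.mono (Set.subset_add_left _ h₂.zero_mem)
  span_eq := by
    rw [span_add_of_zero_mem h₁.zero_mem h₂.zero_mem, h₁.span_eq, h₂.span_eq, coordSubspace_union]
  suppSplit v hv := by
    have hs := h₁.disjoint h₂ hd
    obtain ⟨p, q, rfl, hp, hq⟩ := IsFaceIn.exists_add hv h₁.nontrivial h₂.nontrivial
    have hpH := h₁.subset_coordSubspace hp.mem_of_singleton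
    have hqH := h₂.subset_coordSubspace hq.mem_of_singleton
    rw [← Set.singleton_add_singleton, hA.2.2 {p} {q} hp.to_span hq.to_span, centroid_singleton,
      centroid_singleton]
    refine ((h₁.suppSplit p hp).add (h₂.suppSplit q hq) hpH hqH hs).add_span_singleton
      (sub_mem (smul_mem _ _ ?_) (smul_mem _ _ ?_))
    · exact suppSpan_le_suppSpan_add hpH hqH hs (self_mem_suppSpan p)
    · exact add_comm q p ▸ suppSpan_le_suppSpan_add hqH hpH hs.symm (self_mem_suppSpan q)

end StdHannerInvariant

theorem StdHannerRep.exists_invariant {H H' : Set (Euc n)} {A A' : Set (Euc n) → Set (Euc n)}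
    (hH : StdHannerRep H A H' A') :
    (∃ s, StdHannerInvariant H A s) ∧ ∃ s', StdHannerInvariant H' A' s' := by
  induction hH with
  | seg j A A' hA₁ hA₂ hA'₁ hA'₂ =>
    exact ⟨⟨_, .seg j hA₁ hA₂⟩, _, .seg j hA'₁ hA'₂⟩
  | l1 _ _ hspan hA hA' ih₁ ih₂ =>
    obtain ⟨⟨_, g₁⟩, _, g₁'⟩ := ih₁
    obtain ⟨⟨_, g₂⟩, _, g₂'⟩ := ih₂
    have hd := disjoint_iff.2 hspan
    exact ⟨⟨_, g₁.l1 g₂ (hd.mono (span_mono Set.subset_union_left)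
        (span_mono Set.subset_union_left)) hA⟩,
      _, g₁'.linf g₂' (hd.mono (span_mono Set.subset_union_right)
        (span_mono Set.subset_union_right)) hA'⟩
  | linf _ _ hspan hA hA' ih₁ ih₂ =>
    obtain ⟨⟨_, g₁⟩, _, g₁'⟩ := ih₁
    obtain ⟨⟨_, g₂⟩, _, g₂'⟩ := ih₂
    have hd := disjoint_iff.2 hspan
    exact ⟨⟨_, g₁.linf g₂ (hd.mono (span_mono Set.subset_union_left)
        (span_mono Set.subset_union_left)) hA⟩,
      _, g₁'.l1 g₂' (hd.mono (span_mono Set.subset_union_right)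
        (span_mono Set.subset_union_right)) hA'⟩

end Invariant

theorem vertex_subspace_section_eq_projection_general (n : ℕ) (H H' : Set (Euc n))
    (A A' : Set (Euc n) → Set (Euc n)) (hH : StdHannerRep H A H' A')
    (v : Euc n) (hv : IsFaceOf H {v}) :
    A {v} ∩ (suppSpan v : Set (Euc n)) = projSet (suppSpan v) (A {v}) := by
  obtain ⟨⟨s, hs⟩, -⟩ := hH.exists_invariant
  exact (hs.suppSplit v hv).inter_eq_projSet

/-- **Lemma 6.5.** For a vertex `v` of a standard Hanner polytope `H`, the associated affine
subspace `A_v` of the zero-dimensional face `{v}` satisfies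
`A_v ∩ ℝ^(v) = A_v | ℝ^(v)` (intersection with `ℝ^(v)` equals orthogonal projection
onto `ℝ^(v)`). -/
theorem vertex_subspace_section_eq_projection (n : ℕ) (H H' : Set (Euc n))
    (A A' : Set (Euc n) → Set (Euc n)) (hH : StdHannerRep H A H' A')
    (hspan : Submodule.span ℝ H = ⊤) (v : Euc n) (hv : IsFaceOf H {v}) :
    A {v} ∩ (suppSpan v : Set (Euc n)) = projSet (suppSpan v) (A {v}) :=
  vertex_subspace_section_eq_projection_general n H H' A A' hH v hv
end
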